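/- arXiv:1710.10651 — 3 statements merged into one kernel-verified Lean document; each statement's English description precedes it below -/
import Mathlib

section
/- Let I = ⟨x + y + z, x² + y² + z²⟩ ⊆ ℚ[x,y,z]. Then the line ℝ·(1,1,1) is contained in trop V(I); that is, for every λ ∈ ℝ and every nonzero h ∈ I, the minimum in trop(h)(λ, λ, λ) is achieved for at least two distinct exponents. -/
/-!
At `w = (λ, …, λ)` the weight of an exponent `u` is `λ · deg u`, so the exponents of `h`
minimizing it are those of a single degree `d`, i.e. the support of the homogeneous component
`h_d`. The ideal is homogeneous, hence `h_d ∈ I`, and `I` contains no monomial because every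
element vanishes at `(1, ζ, ζ²)` with `ζ` a primitive cube root of unity. So `h_d` has at least
two terms, which give the two minimizing exponents.
-/

open MvPolynomial

/-- The tropical hypersurface of a polynomial `f` over a field with trivial valuation:
the set of `w ∈ ℝⁿ` at which the minimum of `w · u` over exponents `u` in the support
of `f` is attained for at least two distinct exponents. -/
def tropHypersurface {n : ℕ} {K : Type*} [Field K] (f : MvPolynomial (Fin n) K) :
    Set (Fin n → ℝ) :=
  {w | ∃ u ∈ f.support, ∃ v ∈ f.support, u ≠ v ∧
    (∀ m ∈ f.support, (∑ i, w i * (u i : ℝ)) ≤ ∑ i, w i * (m i : ℝ)) ∧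
    (∀ m ∈ f.support, (∑ i, w i * (v i : ℝ)) ≤ ∑ i, w i * (m i : ℝ))}

/-- The tropical variety of an ideal `I`: the intersection of the tropical hypersurfaces
of all nonzero elements of `I`. -/
def tropVariety {n : ℕ} {K : Type*} [Field K] (I : Ideal (MvPolynomial (Fin n) K)) :
    Set (Fin n → ℝ) :=
  {w | ∀ f ∈ I, f ≠ 0 → w ∈ tropHypersurface f}

attribute [local instance] MvPolynomial.gradedAlgebra

namespace MvPolynomial

variable {σ K : Type*}

lemma exists_ne_mem_support_of_monomial_notMem [CommSemiring K]
    {I : Ideal (MvPolynomial σ K)}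
    (hI : ∀ u c, monomial u c ∈ I → c = 0) {p : MvPolynomial σ K} (hp : p ∈ I)
    {u : σ →₀ ℕ} (hu : u ∈ p.support) : ∃ v ∈ p.support, v ≠ u := by
  by_contra! hsingle
  rw [eq_monomial_of_support_subset_singleton hsingle] at hp
  exact mem_support_iff.mp hu (hI u _ hp)

lemma homogeneousComponent_mem_of_isHomogeneous [CommSemiring K]
    {I : Ideal (MvPolynomial σ K)} (hI : I.IsHomogeneous (homogeneousSubmodule σ K))
    {p : MvPolynomial σ K} (hp : p ∈ I) (d : ℕ) : homogeneousComponent d p ∈ I := by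
  rw [← decomposition.decompose'_apply]
  exact hI d hp

lemma eq_zero_of_monomial_mem_of_aeval_eq_zero [Field K] {L : Type*} [CommRing L] [IsDomain L]
    [Algebra K L] {I : Ideal (MvPolynomial σ K)} {x : σ → L} (hx : ∀ i, x i ≠ 0)
    (hI : ∀ f ∈ I, aeval x f = 0) (u : σ →₀ ℕ) (c : K) (hmem : monomial u c ∈ I) :
    c = 0 := by
  have hprod : u.prod (fun i k ↦ x i ^ k) ≠ 0 :=
    Finsupp.prod_ne_zero_iff.mpr fun i _ ↦ pow_ne_zero _ (hx i)
  simpa [aeval_monomial, hprod] using hI _ hmem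

end MvPolynomial

lemma sum_const_mul_eq_mul_degree {n : ℕ} (lam : ℝ) (u : Fin n →₀ ℕ) :
    ∑ i, lam * (u i : ℝ) = lam * u.degree := by
  rw [← Finset.mul_sum, Finsupp.degree_eq_sum]
  push_cast
  rfl

theorem const_mem_tropVariety_of_isHomogeneous {n : ℕ} {K : Type*} [Field K]
    {I : Ideal (MvPolynomial (Fin n) K)} (hI : I.IsHomogeneous (homogeneousSubmodule (Fin n) K))
    (hmon : ∀ u c, monomial u c ∈ I → c = 0) (lam : ℝ) :
    (fun _ ↦ lam) ∈ tropVariety I := by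
  intro h hh hne
  obtain ⟨u, hu, hmin⟩ := h.support.exists_min_image (fun m ↦ lam * (m.degree : ℝ))
    (support_nonempty.mpr hne)
  have hsupp : ∀ m, m ∈ (homogeneousComponent u.degree h).support ↔
      m ∈ h.support ∧ m.degree = u.degree := by
    simp [support_homogeneousComponent]
  obtain ⟨v, hv, hvu⟩ := exists_ne_mem_support_of_monomial_notMem hmon
    (homogeneousComponent_mem_of_isHomogeneous hI hh u.degree) ((hsupp u).mpr ⟨hu, rfl⟩)
  obtain ⟨hv, hvdeg⟩ := (hsupp v).mp hv
  refine ⟨u, hu, v, hv, hvu.symm, fun m hm ↦ ?_, fun m hm ↦ ?_⟩ <;>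
    simp only [sum_const_mul_eq_mul_degree]
  · exact hmin m hm
  · exact hvdeg ▸ hmin m hm

lemma isHomogeneous_span_sum_X_sum_X_sq :
    (Ideal.span {(X 0 + X 1 + X 2 : MvPolynomial (Fin 3) ℚ),
      X 0 ^ 2 + X 1 ^ 2 + X 2 ^ 2}).IsHomogeneous (homogeneousSubmodule (Fin 3) ℚ) := by
  apply Ideal.homogeneous_span
  rintro p (rfl | rfl)
  · exact ⟨1, ((isHomogeneous_X _ _).add (isHomogeneous_X _ _)).add (isHomogeneous_X _ _)⟩
  · exact ⟨2, ((isHomogeneous_X_pow _ _).add (isHomogeneous_X_pow _ _)).add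
      (isHomogeneous_X_pow _ _)⟩

lemma aeval_eq_zero_of_mem_span_sum_X_sum_X_sq {ζ : ℂ} (hζ : IsPrimitiveRoot ζ 3)
    {f : MvPolynomial (Fin 3) ℚ}
    (hf : f ∈ Ideal.span {X 0 + X 1 + X 2, X 0 ^ 2 + X 1 ^ 2 + X 2 ^ 2}) :
    aeval ![1, ζ, ζ ^ 2] f = 0 := by
  have hsum : 1 + ζ + ζ ^ 2 = 0 := by
    simpa [Finset.sum_range_succ] using hζ.geom_sum_eq_zero (by norm_num)
  suffices h : Ideal.span {X 0 + X 1 + X 2, X 0 ^ 2 + X 1 ^ 2 + X 2 ^ 2} ≤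
      RingHom.ker (aeval (R := ℚ) ![1, ζ, ζ ^ 2]) from h hf
  rw [Ideal.span_le]
  rintro p (rfl | rfl) <;> simp only [SetLike.mem_coe, RingHom.mem_ker]
  · simpa using hsum
  · simp only [map_add, map_pow, aeval_X, Matrix.cons_val_zero, Matrix.cons_val_one,
      Matrix.cons_val, one_pow]
    linear_combination hsum + ζ * hζ.pow_eq_one

theorem stmt4 (lam : ℝ) :
    (fun _ => lam : Fin 3 → ℝ) ∈
      tropVariety (Ideal.span {(X 0 + X 1 + X 2 : MvPolynomial (Fin 3) ℚ),
        (X 0 ^ 2 + X 1 ^ 2 + X 2 ^ 2 : MvPolynomial (Fin 3) ℚ)}) := by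
  have hζ : IsPrimitiveRoot (Complex.exp (2 * Real.pi * Complex.I / 3)) 3 :=
    Complex.isPrimitiveRoot_exp 3 (by norm_num)
  refine const_mem_tropVariety_of_isHomogeneous isHomogeneous_span_sum_X_sum_X_sq
    (fun u c ↦ eq_zero_of_monomial_mem_of_aeval_eq_zero ?_
      (fun f hf ↦ aeval_eq_zero_of_mem_span_sum_X_sum_X_sq hζ hf) u c) lam
  intro i
  fin_cases i <;> simp [hζ.ne_zero (by norm_num)]
end

section
/- Let K be a field with trivial valuation and let f, g ∈ K[x₁,…,x_n] be nonzero polynomials. Then for every w ∈ ℝⁿ, trop(fg)(w) = trop(f)(w) + trop(g)(w). -/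
/-!
Weigh each exponent `u` by `w · u`, an additive map to `ℝ`. Among the minimal-weight exponents
of `f` and of `g`, choose `a` and `b` such that `a + b` is reached in only one way as a sum of
two such exponents (possible since `ℕⁿ` has unique sums). Any decomposition `a + b = a' + b'`
over the supports of `f` and `g` then also consists of minimal-weight exponents, so the
coefficient of `x^(a + b)` in `f g` is the product of two nonzero coefficients. Hence the minimum
`trop(f) + trop(g)` is attained on the support of `f g`; the reverse inequality holds because
every exponent of `f g` is a sum of exponents of `f` and `g`.
-/

open MvPolynomial

/-- The tropicalization of a nonzero polynomial `f` over a field with trivial valuation,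
evaluated at `w`: the minimum of `w · u` over exponents `u` in the support of `f`. -/
noncomputable def tropicalization {n : ℕ} {K : Type*} [Field K]
    (f : MvPolynomial (Fin n) K) (hf : f ≠ 0) (w : Fin n → ℝ) : ℝ :=
  f.support.inf' (MvPolynomial.support_nonempty.mpr hf)
    (fun u => ∑ i, w i * (u i : ℝ))

namespace MvPolynomial

variable {σ R : Type*} [CommSemiring R]

theorem coeff_mul_add_of_uniqueAdd {p q : MvPolynomial σ R} {a b : σ →₀ ℕ}
    (h : UniqueAdd p.support q.support a b) : coeff (a + b) (p * q) = coeff a p * coeff b q :=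
  AddMonoidAlgebra.coeff_mul_add_of_uniqueAdd h

variable [NoZeroDivisors R] {M : Type*} [AddCommMonoid M] [LinearOrder M]
  [IsOrderedCancelAddMonoid M] (φ : (σ →₀ ℕ) →+ M) {p q : MvPolynomial σ R}

theorem exists_mem_support_mul_map_eq_inf'_add_inf' (hp : p.support.Nonempty)
    (hq : q.support.Nonempty) :
    ∃ m ∈ (p * q).support, φ m = p.support.inf' hp φ + q.support.inf' hq φ := by
  set α := p.support.inf' hp φ
  set β := q.support.inf' hq φ
  have hα : {a ∈ p.support | φ a = α}.Nonempty := by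
    obtain ⟨a, ha, hαa⟩ := p.support.exists_mem_eq_inf' hp φ
    exact ⟨a, Finset.mem_filter.mpr ⟨ha, hαa.symm⟩⟩
  have hβ : {b ∈ q.support | φ b = β}.Nonempty := by
    obtain ⟨b, hb, hβb⟩ := q.support.exists_mem_eq_inf' hq φ
    exact ⟨b, Finset.mem_filter.mpr ⟨hb, hβb.symm⟩⟩
  obtain ⟨a, ha, b, hb, hab⟩ := UniqueSums.uniqueAdd_of_nonempty hα hβ
  rw [Finset.mem_filter] at ha hb
  have huniq : UniqueAdd p.support q.support a b := fun a' b' ha' hb' he => by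
    have hmin := (add_eq_add_iff_eq_and_eq (p.support.inf'_le φ ha') (q.support.inf'_le φ hb')).mp
      (by rw [← map_add, he, map_add, ha.2, hb.2])
    exact hab (Finset.mem_filter.mpr ⟨ha', hmin.1.symm⟩)
      (Finset.mem_filter.mpr ⟨hb', hmin.2.symm⟩) he
  refine ⟨a + b, ?_, by rw [map_add, ha.2, hb.2]⟩
  rw [mem_support_iff, coeff_mul_add_of_uniqueAdd huniq]
  exact mul_ne_zero (mem_support_iff.mp ha.1) (mem_support_iff.mp hb.1)

theorem inf'_support_mul (hp : p.support.Nonempty) (hq : q.support.Nonempty)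
    (hpq : (p * q).support.Nonempty) :
    (p * q).support.inf' hpq φ = p.support.inf' hp φ + q.support.inf' hq φ := by
  classical
  obtain ⟨m, hm, hφm⟩ := exists_mem_support_mul_map_eq_inf'_add_inf' φ hp hq
  refine le_antisymm (hφm ▸ (p * q).support.inf'_le φ hm) (Finset.le_inf' _ _ fun m hm => ?_)
  obtain ⟨a, ha, b, hb, rfl⟩ := Finset.mem_add.mp (support_mul p q hm)
  rw [map_add]
  exact add_le_add (p.support.inf'_le φ ha) (q.support.inf'_le φ hb)

end MvPolynomial

theorem tropicalization_eq_inf'_weight {n : ℕ} {K : Type*} [Field K]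
    (f : MvPolynomial (Fin n) K) (hf : f ≠ 0) (w : Fin n → ℝ) :
    tropicalization f hf w = f.support.inf' (support_nonempty.mpr hf) (Finsupp.weight w) := by
  refine Finset.inf'_congr _ rfl fun u _ => ?_
  rw [Finsupp.weight_apply, Finsupp.sum_fintype _ _ fun i => zero_smul ℕ (w i)]
  simp only [nsmul_eq_mul, mul_comm]

theorem stmt8 {n : ℕ} {K : Type*} [Field K]
    (f g : MvPolynomial (Fin n) K) (hf : f ≠ 0) (hg : g ≠ 0) (w : Fin n → ℝ) :
    tropicalization (f * g) (mul_ne_zero hf hg) w =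
      tropicalization f hf w + tropicalization g hg w := by
  simp only [tropicalization_eq_inf'_weight]
  exact inf'_support_mul _ _ _ _
end

section
/- Let K be a field with trivial valuation and let f ∈ K[x₁,…,x_n] be a nonzero polynomial. Then {f} is a tropical basis of the principal ideal ⟨f⟩: trop V(⟨f⟩) = trop V(f), i.e., for every w ∈ ℝⁿ, if the minimum in trop(f)(w) is achieved at least twice, then for every nonzero g ∈ K[x₁,…,x_n] the minimum in trop(gf)(w) is also achieved at least twice. -/
open MvPolynomial

/-!
Let `in_w(p)` be the part of `p` of least `w`-weight `m`, i.e. `weightedHomogeneousComponent w m p`.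
Weights add under multiplication, so `in_w(g * f) = in_w(g) * in_w(f)`, and `w ∈ trop V(f)` says
exactly that `in_w(f)` has at least two terms. Exponents of a polynomial ring admit two distinct uniquely-reached sums
(`TwoUniqueSums`), so a nonzero polynomial times a polynomial with two terms has two terms.
-/

open Finsupp
open scoped Finset

namespace MvPolynomial

variable {σ R M : Type*}

theorem one_lt_card_support_mul [CommSemiring R] [NoZeroDivisors R] {p q : MvPolynomial σ R}
    (hp : p ≠ 0) (hq : 1 < #q.support) : 1 < #(p * q).support := by
  have hcard : 1 < #p.support * #q.support :=
    lt_of_lt_of_le hq (Nat.le_mul_of_pos_left _ (Finset.card_pos.2 (support_nonempty.2 hp)))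
  obtain ⟨⟨a, b⟩, hab, ⟨a', b'⟩, hab', hne, huniq, huniq'⟩ :=
    TwoUniqueSums.uniqueAdd_of_one_lt_card hcard
  rw [Finset.mem_product] at hab hab'
  have coeff_ne_zero {a b} (ha : a ∈ p.support) (hb : b ∈ q.support)
      (h : UniqueAdd p.support q.support a b) : coeff (a + b) (p * q) ≠ 0 := by
    rw [coeff, AddMonoidAlgebra.coeff_mul_add_of_uniqueAdd h]
    exact mul_ne_zero (mem_support_iff.1 ha) (mem_support_iff.1 hb)
  refine Finset.one_lt_card.2 ⟨a + b, mem_support_iff.2 (coeff_ne_zero hab.1 hab.2 huniq),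
    a' + b', mem_support_iff.2 (coeff_ne_zero hab'.1 hab'.2 huniq'), fun h => hne ?_⟩
  obtain ⟨rfl, rfl⟩ := huniq hab'.1 hab'.2 h.symm
  rfl

variable [CommSemiring R] [AddCommMonoid M] [LinearOrder M] [IsOrderedCancelAddMonoid M]
  {w : σ → M} {a b : M} {p q : MvPolynomial σ R}

theorem le_weight_of_mem_support_mul (hp : ∀ d ∈ p.support, a ≤ weight w d)
    (hq : ∀ d ∈ q.support, b ≤ weight w d) :
    ∀ d ∈ (p * q).support, a + b ≤ weight w d := by
  classical
  intro d hd
  obtain ⟨i, hi, j, hj, rfl⟩ := Finset.mem_add.1 (support_mul p q hd)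
  rw [map_add]
  exact add_le_add (hp i hi) (hq j hj)

theorem weightedHomogeneousComponent_mul_of_le (hp : ∀ d ∈ p.support, a ≤ weight w d)
    (hq : ∀ d ∈ q.support, b ≤ weight w d) :
    weightedHomogeneousComponent w (a + b) (p * q) =
      weightedHomogeneousComponent w a p * weightedHomogeneousComponent w b q := by
  classical
  ext d
  rw [coeff_weightedHomogeneousComponent, coeff_mul, coeff_mul]
  split_ifs with hd
  · refine Finset.sum_congr rfl fun x hx => ?_
    rw [coeff_weightedHomogeneousComponent, coeff_weightedHomogeneousComponent]
    by_cases hx0 : coeff x.1 p * coeff x.2 q = 0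
    · split_ifs <;> simp_all
    have hi := hp x.1 (mem_support_iff.2 (left_ne_zero_of_mul hx0))
    have hj := hq x.2 (mem_support_iff.2 (right_ne_zero_of_mul hx0))
    have hsum : a + b = weight w x.1 + weight w x.2 := by
      rw [← hd, ← map_add, Finset.HasAntidiagonal.mem_antidiagonal.1 hx]
    obtain ⟨rfl, rfl⟩ := (add_eq_add_iff_eq_and_eq hi hj).1 hsum
    rw [if_pos rfl, if_pos rfl]
  · refine (Finset.sum_eq_zero fun x hx => ?_).symm
    rw [coeff_weightedHomogeneousComponent, coeff_weightedHomogeneousComponent]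
    split_ifs with hi hj
    · exact absurd (by rw [← Finset.HasAntidiagonal.mem_antidiagonal.1 hx, map_add, hi, hj]) hd
    all_goals simp

end MvPolynomial

open MvPolynomial

theorem weight_eq_sum_mul {n : ℕ} (w : Fin n → ℝ) (u : Fin n →₀ ℕ) :
    weight w u = ∑ i, w i * (u i : ℝ) := by
  simp [weight_apply, Finsupp.sum_fintype, nsmul_eq_mul, mul_comm]

theorem mem_tropHypersurface_iff {n : ℕ} {K : Type*} [Field K] {f : MvPolynomial (Fin n) K}
    {w : Fin n → ℝ} :
    w ∈ tropHypersurface f ↔ ∃ m, (∀ d ∈ f.support, m ≤ weight w d) ∧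
      1 < #(weightedHomogeneousComponent w m f).support := by
  classical
  simp only [tropHypersurface, Set.mem_ofPred_eq, ← weight_eq_sum_mul, Finset.one_lt_card,
    support_weightedHomogeneousComponent, Finset.mem_filter]
  constructor
  · rintro ⟨u, hu, v, hv, huv, hu_min, hv_min⟩
    exact ⟨weight w u, hu_min, u, ⟨hu, rfl⟩, v, ⟨hv, le_antisymm (hv_min u hu) (hu_min v hv)⟩, huv⟩
  · rintro ⟨m, hm, u, ⟨hu, rfl⟩, v, ⟨hv, hvu⟩, huv⟩
    exact ⟨u, hu, v, hv, huv, hm, hvu ▸ hm⟩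

theorem mem_tropHypersurface_mul {n : ℕ} {K : Type*} [Field K] {f g : MvPolynomial (Fin n) K}
    {w : Fin n → ℝ} (hw : w ∈ tropHypersurface f) (hg : g ≠ 0) :
    w ∈ tropHypersurface (g * f) := by
  classical
  obtain ⟨m, hm, hcard⟩ := mem_tropHypersurface_iff.1 hw
  obtain ⟨a, ha, ha_min⟩ :=
    Finset.exists_min_image g.support (weight w) (support_nonempty.2 hg)
  refine mem_tropHypersurface_iff.2
    ⟨weight w a + m, le_weight_of_mem_support_mul ha_min hm, ?_⟩
  rw [weightedHomogeneousComponent_mul_of_le ha_min hm]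
  have ha' : a ∈ (weightedHomogeneousComponent w (weight w a) g).support := by
    rw [support_weightedHomogeneousComponent]
    exact Finset.mem_filter.2 ⟨ha, rfl⟩
  exact one_lt_card_support_mul (support_nonempty.1 ⟨a, ha'⟩) hcard

theorem stmt9 {n : ℕ} {K : Type*} [Field K] (f : MvPolynomial (Fin n) K) (hf : f ≠ 0) :
    (tropVariety (Ideal.span {f}) = tropHypersurface f) ∧
    (∀ w ∈ tropHypersurface f, ∀ g : MvPolynomial (Fin n) K, g ≠ 0 →
      w ∈ tropHypersurface (g * f)) := by
  refine ⟨Set.Subset.antisymm (fun w hw => hw f (Ideal.mem_span_singleton_self f) hf) ?_,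
    fun w hw g hg => mem_tropHypersurface_mul hw hg⟩
  rintro w hw h hh hh0
  obtain ⟨g, rfl⟩ := Ideal.mem_span_singleton'.1 hh
  exact mem_tropHypersurface_mul hw (left_ne_zero_of_mul hh0)
end
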